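/- arXiv:0709.3419 — 3 statements merged into one kernel-verified Lean document; each statement's English description precedes it below -/
import Mathlib

section
/- For every n ≥ 1 with t(n) ≥ 2, the Lebesgue measure of A(n) satisfies μ(A(n)) ≤ 16·δ(n). -/
open MeasureTheory

/-- `H(n, τ) = min {k ∈ ℕ, k ≥ 1 : t(n+k)/t(n) ≥ τ}`. -/
noncomputable def Hfun (t : ℕ → ℝ) (n : ℕ) (τ : ℝ) : ℕ :=
  sInf {k : ℕ | 1 ≤ k ∧ τ ≤ t (n + k) / t n}

/-- `l(n) = ⌊log₂(t(n)/(2 δ(n)))⌋`. -/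
noncomputable def lfun (t δ : ℕ → ℝ) (n : ℕ) : ℤ :=
  ⌊Real.logb 2 (t n / (2 * δ n))⌋

/-- The dyadic interval `[b/2^{l(n)}, (b+1)/2^{l(n)}]`. -/
noncomputable def dyadic (t δ : ℕ → ℝ) (n : ℕ) (b : ℤ) : Set ℝ :=
  Set.Icc ((b : ℝ) / (2 : ℝ) ^ lfun t δ n) (((b : ℝ) + 1) / (2 : ℝ) ^ lfun t δ n)

/-- `E(n,a) = [a/t(n) − δ(n)/t(n), a/t(n) + δ(n)/t(n)]`. -/
noncomputable def Eset (t δ : ℕ → ℝ) (n : ℕ) (a : ℤ) : Set ℝ :=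
  Set.Icc ((a : ℝ) / t n - δ n / t n) ((a : ℝ) / t n + δ n / t n)

/-- `A(n) ⊆ [0,1]`: the union of the dyadic intervals `[b/2^{l(n)}, (b+1)/2^{l(n)}]`
(`b ∈ ℤ`) that intersect `⋃_{0 ≤ a ≤ ⌈t(n)⌉} E(n,a) ∩ [0,1]`. -/
noncomputable def Aset (t δ : ℕ → ℝ) (n : ℕ) : Set ℝ :=
  (⋃ b ∈ {b : ℤ | (dyadic t δ n b ∩
      ((⋃ a ∈ Set.Icc (0 : ℤ) ⌈t n⌉, Eset t δ n a) ∩ Set.Icc (0 : ℝ) 1)).Nonempty},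
    dyadic t δ n b) ∩ Set.Icc (0 : ℝ) 1

/-- `A(n)^c = [0,1] \ A(n)`. -/
noncomputable def Acomp (t δ : ℕ → ℝ) (n : ℕ) : Set ℝ :=
  Set.Icc (0 : ℝ) 1 \ Aset t δ n

/-- Union of grid intervals `[b/L, (b+1)/L]` meeting an interval of length `2D/T`
has measure at most `8D/T`, when `T/(2D)/2 < L ≤ T/(2D)`. -/
lemma grid_cover_bound (L D T x : ℝ) (hL0 : 0 < L) (hT0 : 0 < T) (hD : 0 < D)
    (h1 : L ≤ T / (2 * D)) (h2 : T / (2 * D) < 2 * L) :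
    volume (⋃ b ∈ {b : ℤ | (Set.Icc ((b : ℝ) / L) (((b : ℝ) + 1) / L) ∩
        Set.Icc x (x + 2 * D / T)).Nonempty},
      Set.Icc ((b : ℝ) / L) (((b : ℝ) + 1) / L)) ≤ ENNReal.ofReal (8 * D / T) := by
  set b₁ : ℤ := ⌈x * L⌉ - 1 with hb₁
  set b₂ : ℤ := ⌊(x + 2 * D / T) * L⌋ with hb₂
  have hsub : (⋃ b ∈ {b : ℤ | (Set.Icc ((b : ℝ) / L) (((b : ℝ) + 1) / L) ∩
        Set.Icc x (x + 2 * D / T)).Nonempty},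
      Set.Icc ((b : ℝ) / L) (((b : ℝ) + 1) / L)) ⊆
      Set.Icc ((b₁ : ℝ) / L) (((b₂ : ℝ) + 1) / L) := by
    intro z hz
    simp only [Set.mem_iUnion, Set.mem_setOf_eq] at hz
    obtain ⟨b, ⟨w, ⟨hw1, hw2⟩, ⟨hw3, hw4⟩⟩, hzb⟩ := hz
    have hble : b ≤ b₂ := by
      apply Int.le_floor.mpr
      have : (b : ℝ) / L ≤ x + 2 * D / T := le_trans hw1 hw4
      calc (b : ℝ) = (b : ℝ) / L * L := by field_simp
        _ ≤ (x + 2 * D / T) * L := by gcongr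
    have hbge : b₁ ≤ b := by
      have hc : ⌈x * L⌉ ≤ b + 1 := by
        apply Int.ceil_le.mpr
        push_cast
        have : x ≤ ((b : ℝ) + 1) / L := le_trans hw3 hw2
        calc x * L ≤ ((b : ℝ) + 1) / L * L := by gcongr
          _ = (b : ℝ) + 1 := by field_simp
      omega
    constructor
    · refine le_trans ?_ hzb.1
      gcongr
    · refine le_trans hzb.2 ?_
      gcongr
  refine le_trans (measure_mono hsub) ?_
  rw [Real.volume_Icc]
  apply ENNReal.ofReal_le_ofReal
  rw [div_sub_div_same, div_le_div_iff₀ hL0 hT0]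
  have h1' : 2 * D * L ≤ T := by
    rw [le_div_iff₀ (by positivity)] at h1; linarith
  have h2' : T < 4 * D * L := by
    rw [div_lt_iff₀ (by positivity)] at h2; linarith
  have hceil : x * L ≤ (⌈x * L⌉ : ℝ) := Int.le_ceil _
  rcases eq_or_lt_of_le h1' with heq | hlt
  · have hx1 : (x + 2 * D / T) * L = x * L + 1 := by
      field_simp
      ring_nf
      nlinarith
    have hb2' : b₂ = ⌊x * L⌋ + 1 := by
      rw [hb₂, hx1]
      exact_mod_cast Int.floor_add_one (x * L)
    have hfc : ⌊x * L⌋ ≤ ⌈x * L⌉ := Int.floor_le_ceil _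
    have hfc' : (⌊x * L⌋ : ℝ) ≤ (⌈x * L⌉ : ℝ) := by exact_mod_cast hfc
    have hN : ((b₂ : ℝ) + 1 - (b₁ : ℝ)) ≤ 3 := by
      rw [hb2', hb₁]; push_cast; linarith
    nlinarith [mul_le_mul_of_nonneg_right hN hT0.le, mul_pos hD hL0]
  · have hb2le : b₂ ≤ ⌈x * L⌉ := by
      have : (x + 2 * D / T) * L < ((⌈x * L⌉ + 1 : ℤ) : ℝ) := by
        push_cast
        have : 2 * D / T * L < 1 := by
          rw [div_mul_eq_mul_div, div_lt_one hT0]; linarith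
        nlinarith [hceil]
      have := Int.floor_lt.mpr this
      omega
    have hN : ((b₂ : ℝ) + 1 - (b₁ : ℝ)) ≤ 2 := by
      rw [hb₁]; push_cast
      have : (b₂ : ℝ) ≤ (⌈x * L⌉ : ℝ) := by exact_mod_cast hb2le
      linarith
    nlinarith [mul_le_mul_of_nonneg_right hN hT0.le]

/-- `μ(A(n)) ≤ 16 δ(n)` whenever `n ≥ 1` and `t(n) ≥ 2`. -/
theorem measure_Aset_le
    (t : ℕ → ℝ) (ht1 : 1 ≤ t 1)
    (htinc : ∀ n : ℕ, 1 ≤ n → t n < t (n + 1))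
    (htlim : Filter.Tendsto t Filter.atTop Filter.atTop)
    (δ : ℕ → ℝ) (hδpos : ∀ n, 0 < δ n) (hδanti : Antitone δ)
    (n : ℕ) (hn : 1 ≤ n) (htn : 2 ≤ t n) :
    volume (Aset t δ n) ≤ ENNReal.ofReal (16 * δ n) := by
  set T := t n with hTdef
  set D := δ n with hDdef
  have hT2 : (2 : ℝ) ≤ T := htn
  have hT0 : (0 : ℝ) < T := by linarith
  have hD0 : 0 < D := hδpos n
  set l := lfun t δ n with hldef
  set L : ℝ := (2 : ℝ) ^ l with hLdef
  have hL0 : 0 < L := by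
    rw [hLdef]; exact zpow_pos (by norm_num) l
  have hr0 : (0 : ℝ) < T / (2 * D) := by positivity
  have h1 : L ≤ T / (2 * D) := by
    have hfl := Int.floor_le (Real.logb 2 (T / (2 * D)))
    have h : (2 : ℝ) ^ ((l : ℝ)) ≤ (2 : ℝ) ^ Real.logb 2 (T / (2 * D)) :=
      Real.rpow_le_rpow_of_exponent_le one_le_two (by
        rw [hldef, lfun, ← hTdef, ← hDdef]; exact hfl)
    rwa [Real.rpow_intCast, Real.rpow_logb (by norm_num) (by norm_num) hr0, ← hLdef] at h
  have h2 : T / (2 * D) < 2 * L := by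
    have hfl := Int.lt_floor_add_one (Real.logb 2 (T / (2 * D)))
    have h : (2 : ℝ) ^ Real.logb 2 (T / (2 * D)) < (2 : ℝ) ^ (((l + 1 : ℤ) : ℝ)) :=
      Real.rpow_lt_rpow_of_exponent_lt one_lt_two (by
        push_cast
        rw [hldef, lfun, ← hTdef, ← hDdef]; exact hfl)
    rw [Real.rpow_intCast, Real.rpow_logb (by norm_num) (by norm_num) hr0] at h
    calc T / (2 * D) < (2 : ℝ) ^ (l + 1) := h
      _ = 2 * L := by rw [hLdef, zpow_add_one₀ (by norm_num)]; ring
  have key : ∀ a : ℤ,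
      volume (⋃ b ∈ {b : ℤ | (dyadic t δ n b ∩ Eset t δ n a).Nonempty}, dyadic t δ n b)
        ≤ ENNReal.ofReal (8 * D / T) := by
    intro a
    have hE : Set.Icc ((a : ℝ) / T - D / T) ((a : ℝ) / T - D / T + 2 * D / T)
        = Eset t δ n a := by
      unfold Eset; rw [← hTdef, ← hDdef]; congr 1; ring
    have H := grid_cover_bound L D T ((a : ℝ) / T - D / T) hL0 hT0 hD0 h1 h2
    rw [hE] at H
    exact H
  have hsub : Aset t δ n ⊆ ⋃ a ∈ Finset.Icc (0 : ℤ) ⌈T⌉,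
      ⋃ b ∈ {b : ℤ | (dyadic t δ n b ∩ Eset t δ n a).Nonempty}, dyadic t δ n b := by
    intro z hz
    obtain ⟨hz1, _⟩ := hz
    simp only [Set.mem_iUnion, Set.mem_setOf_eq, exists_prop] at hz1
    obtain ⟨b, ⟨w, hw1, hw2, _⟩, hzb⟩ := hz1
    simp only [Set.mem_iUnion, exists_prop] at hw2
    obtain ⟨a, ha, hwa⟩ := hw2
    simp only [Set.mem_iUnion, Set.mem_setOf_eq, exists_prop]
    exact ⟨a, Finset.mem_Icc.mpr (Set.mem_Icc.mp ha), b, ⟨w, hw1, hwa⟩, hzb⟩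
  have hcard : ((Finset.Icc (0 : ℤ) ⌈T⌉).card : ℝ) ≤ T + 2 := by
    rw [Int.card_Icc]
    have h0 : (0 : ℤ) ≤ ⌈T⌉ := Int.ceil_nonneg (by linarith)
    have h3 : ((⌈T⌉ : ℤ) : ℝ) < T + 1 := Int.ceil_lt_add_one T
    have h4 : ((⌈T⌉ + 1 - 0).toNat : ℤ) = ⌈T⌉ + 1 := by
      rw [Int.toNat_of_nonneg (by omega)]; ring
    have h5 : ((⌈T⌉ + 1 - 0).toNat : ℝ) = ((⌈T⌉ : ℤ) : ℝ) + 1 := by exact_mod_cast h4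
    rw [h5]; linarith
  calc volume (Aset t δ n)
      ≤ volume (⋃ a ∈ Finset.Icc (0 : ℤ) ⌈T⌉,
        ⋃ b ∈ {b : ℤ | (dyadic t δ n b ∩ Eset t δ n a).Nonempty}, dyadic t δ n b) :=
        measure_mono hsub
    _ ≤ ∑ a ∈ Finset.Icc (0 : ℤ) ⌈T⌉,
        volume (⋃ b ∈ {b : ℤ | (dyadic t δ n b ∩ Eset t δ n a).Nonempty}, dyadic t δ n b) :=
        measure_biUnion_finset_le _ _
    _ ≤ ∑ _a ∈ Finset.Icc (0 : ℤ) ⌈T⌉, ENNReal.ofReal (8 * D / T) :=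
        Finset.sum_le_sum fun a _ => key a
    _ = (Finset.Icc (0 : ℤ) ⌈T⌉).card • ENNReal.ofReal (8 * D / T) := Finset.sum_const _
    _ = ENNReal.ofReal (((Finset.Icc (0 : ℤ) ⌈T⌉).card : ℝ) * (8 * D / T)) := by
        rw [nsmul_eq_mul, ← ENNReal.ofReal_natCast, ← ENNReal.ofReal_mul (by positivity)]
    _ ≤ ENNReal.ofReal (16 * D) := by
        apply ENNReal.ofReal_le_ofReal
        have h8 : (0 : ℝ) ≤ 8 * D / T := by positivity
        have := mul_le_mul_of_nonneg_right hcard h8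
        refine le_trans this ?_
        have heq : (T + 2) * (8 * D / T) = (T + 2) * 8 * D / T := by ring
        rw [heq, div_le_iff₀ hT0]
        nlinarith
end

section
/- Assume t(n) ≥ 2 for all n ≥ 1. Then for every natural number n₀ ≥ 1, μ(⋂_{n ≤ n₀} A(n)^c) ≥ 1 − 16·∑_{n=1}^{n₀} δ(n). -/
open MeasureTheory

/-!
Fix `n` and put `d = 2δ(n)/t(n)`, the length of each `E(n,a)`, and `w = 2^{-l(n)}`, the width
of the dyadic cells. The choice of `l(n)` gives `d ≤ w < 2d`, so the cells meeting one `E(n,a)`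
have total length at most `w (⌊d/w⌋ + 2) ≤ 4d` (it is `3w = 3d` if `d = w`, and `2w < 4d`
otherwise). There are `⌈t(n)⌉ + 1 ≤ 2t(n)` centres `a`, whence `μ(A(n)) ≤ 16δ(n)`, and
`⋂ A(n)^c ⊇ [0,1] \ ⋃ A(n)` gives the bound by subadditivity.
-/

open Set

theorem Int.floor_sub_ceil_le_floor_sub (x y : ℝ) : ⌊x⌋ - ⌈y⌉ ≤ ⌊x - y⌋ :=
  Int.le_floor.mpr (by push_cast; linarith [Int.floor_le x, Int.le_ceil y])

theorem Int.floor_add_two_le_four_mul {x : ℝ} (h1 : x ≤ 1) (h2 : 1 < 2 * x) :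
    (⌊x⌋ : ℝ) + 2 ≤ 4 * x := by
  rcases h1.lt_or_eq with h1 | rfl
  · rw [Int.floor_eq_zero_iff.mpr ⟨by linarith, h1⟩]; push_cast; linarith
  · norm_num

theorem Real.natCast_zpow_floor_logb_le {b : ℕ} (hb : 1 < b) {x : ℝ} (hx : 0 < x) :
    (b : ℝ) ^ ⌊Real.logb b x⌋ ≤ x := by
  rw [Real.floor_logb_natCast hx.le]
  exact Int.zpow_log_le_self hb hx

theorem Real.lt_natCast_mul_zpow_floor_logb {b : ℕ} (hb : 1 < b) {x : ℝ} (hx : 0 < x) :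
    x < b * (b : ℝ) ^ ⌊Real.logb b x⌋ := by
  rw [Real.floor_logb_natCast hx.le, mul_comm, ← zpow_add_one₀ (by positivity)]
  exact Int.lt_zpow_succ_log_self hb x

theorem Icc_div_subset_of_meets_Icc {K u v : ℝ} (hK : 0 < K) {b : ℤ}
    (h : (Icc (b / K) ((b + 1) / K) ∩ Icc u v).Nonempty) :
    Icc (b / K) ((b + 1) / K) ⊆ Icc ((⌈u * K⌉ - 1) / K) ((⌊v * K⌋ + 1) / K) := by
  obtain ⟨y, ⟨hby, hyb⟩, huy, hyv⟩ := h
  rw [div_le_iff₀ hK] at hby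
  rw [le_div_iff₀ hK] at hyb
  have hb_le : (b : ℝ) ≤ ⌊v * K⌋ := by exact_mod_cast Int.le_floor.mpr (by nlinarith)
  have hb_ge : ⌈u * K⌉ ≤ b + 1 := Int.ceil_le.mpr (by push_cast; nlinarith)
  have hb_ge' : (⌈u * K⌉ : ℝ) - 1 ≤ b := by
    rw [sub_le_iff_le_add]; exact_mod_cast hb_ge
  exact Icc_subset_Icc (by gcongr) (by gcongr)

theorem volume_Icc_ceil_floor_le {K u v : ℝ} (hK : 0 < K) (h1 : (v - u) * K ≤ 1)
    (h2 : 1 < 2 * ((v - u) * K)) :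
    volume (Icc ((⌈u * K⌉ - 1) / K) ((⌊v * K⌋ + 1) / K)) ≤
      ENNReal.ofReal (4 * (v - u)) := by
  rw [Real.volume_Icc]
  refine ENNReal.ofReal_le_ofReal ?_
  have hfloor : (⌊v * K⌋ - ⌈u * K⌉ : ℝ) ≤ ⌊(v - u) * K⌋ := by
    rw [sub_mul]; exact_mod_cast Int.floor_sub_ceil_le_floor_sub _ _
  calc (⌊v * K⌋ + 1) / K - (⌈u * K⌉ - 1) / K
        = (⌊v * K⌋ - ⌈u * K⌉ + 2) / K := by ring
    _ ≤ (⌊(v - u) * K⌋ + 2) / K := by gcongr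
    _ ≤ 4 * ((v - u) * K) / K := by gcongr; exact Int.floor_add_two_le_four_mul h1 h2
    _ = 4 * (v - u) := by field_simp

theorem card_Icc_zero_ceil_le {x : ℝ} (hx : 0 ≤ x) :
    ((Finset.Icc 0 ⌈x⌉).card : ℝ) ≤ x + 2 := by
  have hcard : ((Finset.Icc 0 ⌈x⌉).card : ℤ) = ⌈x⌉ + 1 - 0 :=
    Int.card_Icc_of_le _ _ (by have := Int.ceil_nonneg hx; omega)
  have hcard' : ((Finset.Icc 0 ⌈x⌉).card : ℝ) = ⌈x⌉ + 1 := by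
    exact_mod_cast hcard.trans (sub_zero _)
  linarith [Int.ceil_lt_add_one x]

theorem Aset_subset_iUnion (t δ : ℕ → ℝ) (n : ℕ) :
    Aset t δ n ⊆ ⋃ a ∈ Finset.Icc 0 ⌈t n⌉,
      Icc ((⌈(a / t n - δ n / t n) * 2 ^ lfun t δ n⌉ - 1) / 2 ^ lfun t δ n)
        ((⌊(a / t n + δ n / t n) * 2 ^ lfun t δ n⌋ + 1) / 2 ^ lfun t δ n) := by
  rintro x ⟨hx, -⟩
  simp only [mem_iUnion, mem_ofPred_eq] at hx
  obtain ⟨b, ⟨y, hyb, hyE, -⟩, hxb⟩ := hx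
  simp only [mem_iUnion] at hyE
  obtain ⟨a, ha, hya⟩ := hyE
  simp only [mem_iUnion, Finset.mem_Icc]
  exact ⟨a, ha, Icc_div_subset_of_meets_Icc (zpow_pos two_pos _) ⟨y, hyb, hya⟩ hxb⟩

theorem zpow_lfun_mul_le {t δ : ℕ → ℝ} {n : ℕ} (ht : 0 < t n) (hδ : 0 < δ n) :
    2 ^ lfun t δ n * (2 * δ n) ≤ t n := by
  have := Real.natCast_zpow_floor_logb_le (b := 2) one_lt_two (div_pos ht (mul_pos two_pos hδ))
  push_cast at this
  rwa [le_div_iff₀ (by positivity)] at this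

theorem lt_two_mul_zpow_lfun_mul {t δ : ℕ → ℝ} {n : ℕ} (ht : 0 < t n) (hδ : 0 < δ n) :
    t n < 2 * 2 ^ lfun t δ n * (2 * δ n) := by
  have := Real.lt_natCast_mul_zpow_floor_logb (b := 2) one_lt_two (div_pos ht (mul_pos two_pos hδ))
  push_cast at this
  rwa [div_lt_iff₀ (by positivity)] at this

theorem volume_Aset_le (t δ : ℕ → ℝ) (n : ℕ) (ht : 2 ≤ t n) (hδ : 0 < δ n) :
    volume (Aset t δ n) ≤ ENNReal.ofReal (16 * δ n) := by
  have ht0 : 0 < t n := by linarith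
  set K : ℝ := 2 ^ lfun t δ n
  have hK : 0 < K := zpow_pos two_pos _
  have hK_le : 2 * δ n / t n * K ≤ 1 := by
    rw [div_mul_eq_mul_div, div_le_one ht0]; linarith [zpow_lfun_mul_le ht0 hδ]
  have hK_gt : 1 < 2 * (2 * δ n / t n * K) := by
    rw [div_mul_eq_mul_div, mul_div_assoc', one_lt_div ht0]
    linarith [lt_two_mul_zpow_lfun_mul ht0 hδ]
  have hwidth (a : ℝ) : a / t n + δ n / t n - (a / t n - δ n / t n) = 2 * δ n / t n := by ring
  calc volume (Aset t δ n)
      ≤ ∑ a ∈ Finset.Icc 0 ⌈t n⌉, volume (Icc ((⌈(a / t n - δ n / t n) * K⌉ - 1) / K)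
          ((⌊(a / t n + δ n / t n) * K⌋ + 1) / K)) :=
        (measure_mono (Aset_subset_iUnion t δ n)).trans (measure_biUnion_finset_le _ _)
    _ ≤ ∑ _a ∈ Finset.Icc 0 ⌈t n⌉, ENNReal.ofReal (4 * (2 * δ n / t n)) :=
        Finset.sum_le_sum fun a _ => by
          simpa only [hwidth] using volume_Icc_ceil_floor_le (u := a / t n - δ n / t n)
            (v := a / t n + δ n / t n) hK (by rwa [hwidth]) (by rwa [hwidth])
    _ = ENNReal.ofReal ((Finset.Icc 0 ⌈t n⌉).card * (4 * (2 * δ n / t n))) := by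
        rw [Finset.sum_const, nsmul_eq_mul, ENNReal.ofReal_mul (Nat.cast_nonneg _),
          ENNReal.ofReal_natCast]
    _ ≤ ENNReal.ofReal (16 * δ n) := by
        refine ENNReal.ofReal_le_ofReal ?_
        calc ((Finset.Icc 0 ⌈t n⌉).card : ℝ) * (4 * (2 * δ n / t n))
            ≤ (t n + 2) * (4 * (2 * δ n / t n)) := by
              gcongr; exact card_Icc_zero_ceil_le ht0.le
          _ ≤ 2 * t n * (4 * (2 * δ n / t n)) := by gcongr; linarith
          _ = 16 * δ n := by field_simp; ring

theorem measure_iInter_Acomp_ge_general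
    (t : ℕ → ℝ)
    (δ : ℕ → ℝ) (hδpos : ∀ n, 0 < δ n)
    (ht2 : ∀ n : ℕ, 1 ≤ n → 2 ≤ t n)
    (n₀ : ℕ) :
    ENNReal.ofReal (1 - 16 * ∑ n ∈ Finset.Icc 1 n₀, δ n) ≤
      volume (⋂ n ∈ Finset.Icc 1 n₀, Acomp t δ n) := by
  set U := ⋃ n ∈ Finset.Icc 1 n₀, Aset t δ n
  have hU : volume U ≤ ENNReal.ofReal (16 * ∑ n ∈ Finset.Icc 1 n₀, δ n) := by
    rw [Finset.mul_sum, ENNReal.ofReal_sum_of_nonneg fun n _ => by linarith [hδpos n]]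
    refine (measure_biUnion_finset_le _ _).trans (Finset.sum_le_sum fun n hn => ?_)
    exact volume_Aset_le t δ n (ht2 n (Finset.mem_Icc.mp hn).1) (hδpos n)
  calc ENNReal.ofReal (1 - 16 * ∑ n ∈ Finset.Icc 1 n₀, δ n)
      = volume (Icc (0 : ℝ) 1) - ENNReal.ofReal (16 * ∑ n ∈ Finset.Icc 1 n₀, δ n) := by
        have hS : 0 ≤ 16 * ∑ n ∈ Finset.Icc 1 n₀, δ n :=
          mul_nonneg (by norm_num) (Finset.sum_nonneg fun n _ => (hδpos n).le)
        rw [ENNReal.ofReal_sub _ hS, Real.volume_Icc, sub_zero]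
    _ ≤ volume (Icc (0 : ℝ) 1) - volume U := tsub_le_tsub_left hU _
    _ ≤ volume (Icc (0 : ℝ) 1 \ U) := le_measure_sdiff
    _ ≤ volume (⋂ n ∈ Finset.Icc 1 n₀, Acomp t δ n) := by
        refine measure_mono fun x ⟨hx, hxU⟩ => mem_iInter₂.mpr fun n hn => ?_
        exact ⟨hx, fun hxn => hxU (mem_iUnion₂.mpr ⟨n, hn, hxn⟩)⟩

/-- `μ(⋂_{n ≤ n₀} A(n)^c) ≥ 1 − 16 ∑_{n=1}^{n₀} δ(n)` when `t(n) ≥ 2` for all `n ≥ 1`. -/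
theorem measure_iInter_Acomp_ge
    (t : ℕ → ℝ)
    (htinc : ∀ n : ℕ, 1 ≤ n → t n < t (n + 1))
    (htlim : Filter.Tendsto t Filter.atTop Filter.atTop)
    (δ : ℕ → ℝ) (hδpos : ∀ n, 0 < δ n) (hδanti : Antitone δ)
    (ht2 : ∀ n : ℕ, 1 ≤ n → 2 ≤ t n)
    (n₀ : ℕ) (hn₀ : 1 ≤ n₀) :
    ENNReal.ofReal (1 - 16 * ∑ n ∈ Finset.Icc 1 n₀, δ n) ≤
      volume (⋂ n ∈ Finset.Icc 1 n₀, Acomp t δ n) :=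
  measure_iInter_Acomp_ge_general t δ hδpos ht2 n₀
end

section
/- Let n be a natural number with n > h(n) and assume h(n) ≥ H(n − h(n), 1/δ(n − h(n))). Then 2^{l(n−h(n))}/2^{l(n)} ≤ 2 · (t(n−h(n))/t(n)) · (δ(n)/δ(n−h(n))) ≤ 2·δ(n). -/
open MeasureTheory

/-- `2^{l(n−h(n))}/2^{l(n)} ≤ 2 (t(n−h(n))/t(n)) (δ(n)/δ(n−h(n))) ≤ 2 δ(n)`. -/
theorem ratio_pow_lfun_le
    (t : ℕ → ℝ) (ht1 : 1 ≤ t 1)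
    (htinc : ∀ n : ℕ, 1 ≤ n → t n < t (n + 1))
    (htlim : Filter.Tendsto t Filter.atTop Filter.atTop)
    (δ : ℕ → ℝ) (hδpos : ∀ n, 0 < δ n) (hδanti : Antitone δ)
    (h : ℕ → ℕ) (n : ℕ) (hn : h n < n)
    (hi : Hfun t (n - h n) (1 / δ (n - h n)) ≤ h n) :
    (2 : ℝ) ^ lfun t δ (n - h n) / (2 : ℝ) ^ lfun t δ n ≤
        2 * (t (n - h n) / t n) * (δ n / δ (n - h n)) ∧
      2 * (t (n - h n) / t n) * (δ n / δ (n - h n)) ≤ 2 * δ n := by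
  set m := n - h n with hm
  have hm1 : 1 ≤ m := Nat.le_sub_of_add_le (by omega)
  have tmono : ∀ a b : ℕ, 1 ≤ a → a ≤ b → t a ≤ t b := by
    intro a b ha hab
    induction b, hab using Nat.le_induction with
    | base => exact le_refl _
    | succ b hb ih => exact le_trans ih (le_of_lt (htinc b (le_trans ha hb)))
  have ht1' : ∀ k : ℕ, 1 ≤ k → 1 ≤ t k := fun k hk => le_trans ht1 (tmono 1 k le_rfl hk)
  have htm : 0 < t m := lt_of_lt_of_le one_pos (ht1' m hm1)
  have htn : 0 < t n := lt_of_lt_of_le one_pos (ht1' n (by omega))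
  have hδm : 0 < δ m := hδpos m
  have hδn : 0 < δ n := hδpos n
  -- the key Hfun fact
  have hSne : {k : ℕ | 1 ≤ k ∧ 1 / δ m ≤ t (m + k) / t m}.Nonempty := by
    obtain ⟨N, hN⟩ := Filter.eventually_atTop.mp ((Filter.tendsto_atTop.mp htlim) ((1 / δ m) * t m))
    refine ⟨max N (m + 1) - m, ?_, ?_⟩
    · omega
    · rw [le_div_iff₀ htm]
      have : m + (max N (m + 1) - m) = max N (m + 1) := by omega
      rw [this]
      exact hN _ (le_max_left _ _)
  have hHmem := Nat.sInf_mem hSne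
  set H := Hfun t m (1 / δ m) with hH
  have hH1 : 1 ≤ H := hHmem.1
  have hH2 : 1 / δ m ≤ t (m + H) / t m := hHmem.2
  have htnm : 1 / δ m ≤ t n / t m := by
    refine le_trans hH2 (div_le_div_of_nonneg_right ?_ htm.le)
    exact tmono (m + H) n (by omega) (by omega)
  have hkey : t m ≤ δ m * t n := by
    rw [div_le_div_iff₀ (hδpos m) htm] at htnm
    linarith
  -- floor bounds for powers
  have hx : (0:ℝ) < t m / (2 * δ m) := by positivity
  have hy : (0:ℝ) < t n / (2 * δ n) := by positivity
  have hA : (2:ℝ) ^ lfun t δ m ≤ t m / (2 * δ m) := by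
    have h1 : ((2:ℝ) : ℝ) ^ ((lfun t δ m : ℝ)) ≤ (2:ℝ) ^ (Real.logb 2 (t m / (2 * δ m))) :=
      Real.rpow_le_rpow_of_exponent_le one_le_two (Int.floor_le _)
    rw [Real.rpow_intCast, Real.rpow_logb (by norm_num) (by norm_num) hx] at h1
    exact h1
  have hB : t n / (2 * δ n) / 2 ≤ (2:ℝ) ^ lfun t δ n := by
    have h1 : (2:ℝ) ^ (Real.logb 2 (t n / (2 * δ n)) - 1) ≤
        (2:ℝ) ^ ((⌊Real.logb 2 (t n / (2 * δ n))⌋ : ℝ)) := by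
      refine Real.rpow_le_rpow_of_exponent_le one_le_two ?_
      have := Int.sub_one_lt_floor (Real.logb 2 (t n / (2 * δ n)))
      linarith
    rw [Real.rpow_intCast, Real.rpow_sub (by norm_num),
      Real.rpow_logb (by norm_num) (by norm_num) hy, Real.rpow_one] at h1
    exact h1
  have hBpos : (0:ℝ) < (2:ℝ) ^ lfun t δ n := zpow_pos (by norm_num) _
  have hApos : (0:ℝ) < (2:ℝ) ^ lfun t δ m := zpow_pos (by norm_num) _
  constructor
  · have h2 : (2:ℝ) ^ lfun t δ m / (2:ℝ) ^ lfun t δ n ≤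
        (t m / (2 * δ m)) / (t n / (2 * δ n) / 2) := by
      apply div_le_div₀ (le_of_lt hx) hA (by positivity) hB
    refine le_trans h2 (le_of_eq ?_)
    field_simp
  · have h1 : t m / (t n * δ m) ≤ 1 := by
      rw [div_le_one (by positivity)]
      linarith [hkey]
    have : 2 * (t m / t n) * (δ n / δ m) = 2 * δ n * (t m / (t n * δ m)) := by
      field_simp
    rw [this]
    nlinarith [h1, hδn]
end
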